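/- With notation as above (u_i > 0, discrete orthonormality ∑_i u_i φ_j(P_i) φ_k(P_i) = δ_{jk}, and w_i = u_i ∑_j φ_j(P_i) m_j), the weights satisfy ∑_{i=1}^M |w_i| ≤ sqrt(∑_{i=1}^M u_i) · sqrt(∑_{j=1}^N m_j²), i.e. ‖w‖₁ ≤ sqrt(∑ u_i) ‖m‖₂. -/
import Mathlib


/-- Stability bound for the ORTHOCUB weights: `‖w‖₁ ≤ sqrt(∑ u_i) ‖m‖₂`. -/
theorem orthocub_weight_bound
    {B : Type*} {M N : ℕ}
    (φ : Fin N → B → ℝ) (P : Fin M → B) (u : Fin M → ℝ)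
    (hu : ∀ i, 0 < u i)
    (horth : ∀ j k : Fin N,
      (∑ i, u i * φ j (P i) * φ k (P i)) = if j = k then (1 : ℝ) else 0)
    (L : (B → ℝ) →ₗ[ℝ] ℝ)
    (m : Fin N → ℝ) (hm : ∀ j, m j = L (φ j))
    (w : Fin M → ℝ) (hw : ∀ i, w i = u i * ∑ j, φ j (P i) * m j) :
    (∑ i, |w i|) ≤ Real.sqrt (∑ i, u i) * Real.sqrt (∑ j, (m j) ^ 2) := by
  set S : Fin M → ℝ := fun i => ∑ j, φ j (P i) * m j with hS
  have key : (∑ i, u i * (S i) ^ 2) = ∑ j, (m j) ^ 2 := by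
    have step : (∑ i, u i * (S i) ^ 2)
        = ∑ j, ∑ k, m j * m k * ∑ i, u i * φ j (P i) * φ k (P i) := by
      calc (∑ i, u i * (S i) ^ 2)
          = ∑ i, ∑ j, ∑ k, m j * m k * (u i * φ j (P i) * φ k (P i)) := by
            refine Finset.sum_congr rfl fun i _ => ?_
            rw [hS, sq, Finset.sum_mul_sum, Finset.mul_sum]
            refine Finset.sum_congr rfl fun j _ => ?_
            rw [Finset.mul_sum]
            exact Finset.sum_congr rfl fun k _ => by ring
        _ = ∑ j, ∑ i, ∑ k, m j * m k * (u i * φ j (P i) * φ k (P i)) :=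
            Finset.sum_comm
        _ = ∑ j, ∑ k, ∑ i, m j * m k * (u i * φ j (P i) * φ k (P i)) :=
            Finset.sum_congr rfl fun j _ => Finset.sum_comm
        _ = ∑ j, ∑ k, m j * m k * ∑ i, u i * φ j (P i) * φ k (P i) := by
            simp [Finset.mul_sum]
    rw [step]
    simp only [horth, mul_ite, mul_one, mul_zero, Finset.sum_ite_eq, Finset.mem_univ,
      if_true]
    exact Finset.sum_congr rfl fun j _ => by ring
  have habs : (∑ i, |w i|) = ∑ i, Real.sqrt (u i) * (Real.sqrt (u i) * |S i|) := by
    refine Finset.sum_congr rfl fun i _ => ?_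
    rw [hw i, abs_mul, abs_of_pos (hu i), ← mul_assoc,
      Real.mul_self_sqrt (hu i).le]
  rw [habs]
  have cs := Real.sum_mul_le_sqrt_mul_sqrt Finset.univ
    (fun i => Real.sqrt (u i)) (fun i => Real.sqrt (u i) * |S i|)
  calc (∑ i, Real.sqrt (u i) * (Real.sqrt (u i) * |S i|))
      ≤ Real.sqrt (∑ i, Real.sqrt (u i) ^ 2) *
        Real.sqrt (∑ i, (Real.sqrt (u i) * |S i|) ^ 2) := by
        simpa using cs
    _ = Real.sqrt (∑ i, u i) * Real.sqrt (∑ j, (m j) ^ 2) := by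
        rw [← key]
        congr 1
        · congr 1
          exact Finset.sum_congr rfl fun i _ => Real.sq_sqrt (hu i).le
        · congr 1
          refine Finset.sum_congr rfl fun i _ => ?_
          rw [mul_pow, Real.sq_sqrt (hu i).le, sq_abs]
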